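/- arXiv:1806.08003 — 2 statements merged into one kernel-verified Lean document; each statement's English description precedes it below -/
import Mathlib

section
/- An antisymmetric ℝ-bilinear map c : 𝔰 × 𝔰 → ℂ is a Chevalley–Eilenberg 2-cocycle for the trivial representation of 𝔰 on ℂ if and only if it satisfies the following four conditions: (i) c(v, E_j) = 0 and 2·c(v, v') = Ω_j(v, v')·c(H_j, E_j) for all 1 ≤ j ≤ r and v, v' ∈ V_j; (ii) c(X, E_j) = 0 for all 1 ≤ j < r and X ∈ 𝔰_r ⊕ … ⊕ 𝔰_{j+1}; (ii') c(X, v) = c(H_j, [X, v]) for all 1 ≤ j < r, X ∈ 𝔰_r ⊕ … ⊕ 𝔰_{j+1} and v ∈ V_j; (iii) c(v, H_j) = 0 and c(E_k, H_j) = 0 for all 1 ≤ j < k ≤ r and v ∈ V_k. -/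
variable {r : ℕ} {𝔰 : Type} [LieRing 𝔰] [LieAlgebra ℝ 𝔰]

/-- The `j`-th block `𝔰_j = ℝH_j ⊕ V_j ⊕ ℝE_j` of the Pyatetskii–Shapiro decomposition. -/
def psBlock (H E : Fin r → 𝔰) (V : Fin r → Submodule ℝ 𝔰) (j : Fin r) : Submodule ℝ 𝔰 :=
  Submodule.span ℝ {H j} ⊔ V j ⊔ Submodule.span ℝ {E j}

/-- The subspace `𝔰_r ⊕ … ⊕ 𝔰_{j+1}`. -/
def psUpper (H E : Fin r → 𝔰) (V : Fin r → Submodule ℝ 𝔰) (j : Fin r) : Submodule ℝ 𝔰 :=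
  ⨆ k : Fin r, ⨆ _ : j < k, psBlock H E V k

/-- `𝔰` is a Lie algebra in Pyatetskii–Shapiro normal form of rank `r`, with data
`H_j, E_j, V_j, Ω_j`. -/
structure IsPSAlgebra (H E : Fin r → 𝔰) (V : Fin r → Submodule ℝ 𝔰)
    (Ω : Fin r → 𝔰 →ₗ[ℝ] 𝔰 →ₗ[ℝ] ℝ) : Prop where
  /-- the rank is at least one -/
  rank_pos : 0 < r
  /-- as a vector space, `𝔰` is the direct sum of the blocks `𝔰_j` … -/
  total : (⨆ j, psBlock H E V j) = ⊤
  indep : iSupIndep (psBlock H E V)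
  /-- … and each block is the internal direct sum `ℝH_j ⊕ V_j ⊕ ℝE_j` -/
  inner_indep : ∀ (j : Fin r) (a b : ℝ), ∀ v ∈ V j,
    a • H j + v + b • E j = 0 → a = 0 ∧ v = 0 ∧ b = 0
  /-- `Ω_j` is antisymmetric on `V_j` … -/
  omega_anti : ∀ j, ∀ v ∈ V j, ∀ w ∈ V j, Ω j v w = - Ω j w v
  /-- … and nondegenerate on `V_j` -/
  omega_nondeg : ∀ j, ∀ v ∈ V j, (∀ w ∈ V j, Ω j v w = 0) → v = 0
  /-- `[v, E_j] = 0` for `v ∈ V_j` -/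
  lie_vE : ∀ j, ∀ v ∈ V j, ⁅v, E j⁆ = 0
  /-- `[v, v'] = Ω_j(v, v') • E_j` for `v, v' ∈ V_j` -/
  lie_vv : ∀ j, ∀ v ∈ V j, ∀ w ∈ V j, ⁅v, w⁆ = Ω j v w • E j
  /-- `[H_j, v + z•E_j] = v + 2z•E_j` -/
  lie_H : ∀ j, ∀ v ∈ V j, ∀ z : ℝ, ⁅H j, v + z • E j⁆ = v + (2 * z) • E j
  /-- `[X, H_j] = 0` for `X ∈ 𝔰_r ⊕ … ⊕ 𝔰_{j+1}` -/
  lie_upper_H : ∀ j, ∀ X ∈ psUpper H E V j, ⁅X, H j⁆ = 0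
  /-- `[X, E_j] = 0` for `X ∈ 𝔰_r ⊕ … ⊕ 𝔰_{j+1}` -/
  lie_upper_E : ∀ j, ∀ X ∈ psUpper H E V j, ⁅X, E j⁆ = 0
  /-- `[X, V_j] ⊆ V_j` for `X ∈ 𝔰_r ⊕ … ⊕ 𝔰_{j+1}` -/
  lie_upper_V : ∀ j, ∀ X ∈ psUpper H E V j, ∀ v ∈ V j, ⁅X, v⁆ ∈ V j
  /-- `ad_X ∈ 𝔰𝔭(V_j, Ω_j)` for `X ∈ 𝔰_r ⊕ … ⊕ 𝔰_{j+1}` -/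
  omega_invar : ∀ j, ∀ X ∈ psUpper H E V j, ∀ v ∈ V j, ∀ w ∈ V j,
    Ω j ⁅X, v⁆ w + Ω j v ⁅X, w⁆ = 0

/-- `c` is a Chevalley–Eilenberg 2-cocycle on `𝔰` for the trivial representation on `ℂ`. -/
def IsCE2Cocycle (c : 𝔰 →ₗ[ℝ] 𝔰 →ₗ[ℝ] ℂ) : Prop :=
  (∀ X Y : 𝔰, c X Y = - c Y X) ∧
  (∀ X Y Z : 𝔰, c ⁅X, Y⁆ Z + c ⁅Y, Z⁆ X + c ⁅Z, X⁆ Y = 0)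

/-- `c` is a Chevalley–Eilenberg 2-coboundary on `𝔰` for the trivial representation on `ℂ`. -/
def IsCE2Coboundary (c : 𝔰 →ₗ[ℝ] 𝔰 →ₗ[ℝ] ℂ) : Prop :=
  ∃ α : 𝔰 →ₗ[ℝ] ℂ, ∀ X Y : 𝔰, c X Y = α ⁅X, Y⁆

/-!
The cocycle defect `J(X, Y, Z) = c([X, Y], Z) + c([Y, Z], X) + c([Z, X], Y)` is an alternating
trilinear form, so it vanishes once it vanishes on triples of generators `H_j`, `v ∈ V_j`, `E_j`
sorted lexicographically by block index and then in the order `H, V, E`. The six conditions are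
the vanishing of `J` on `(H_j, v, E_j)`, `(H_j, v, v')`, `(X, H_j, E_j)`, `(X, H_j, v)`,
`(H_k, v, H_j)` and `(H_k, E_k, H_j)`. Conversely, in a sorted triple whose first entry lies in
`𝔰_j` the other two lie in `𝔰_j` or in `𝔰_{>j} := 𝔰_r ⊕ … ⊕ 𝔰_{j+1}`, and each of the eleven
resulting cases reduces to the conditions, using the Jacobi identity, the invariance of `Ω_j`
under `𝔰_{>j}` and `[𝔰_{>j}, 𝔰_{>j}] ⊆ ⨁_{k>j} (V_k ⊕ ℝE_k)`.
-/

theorem LinearMap.eq_zero_of_apply_sorted_eq_zero {ι R M N : Type*} [LinearOrder ι]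
    [CommSemiring R] [AddCommMonoid M] [Module R M] [AddCommGroup N] [Module R N]
    (f : M →ₗ[R] M →ₗ[R] M →ₗ[R] N) (swap : ∀ x y z, f x y z = -f y x z)
    (rotate : ∀ x y z, f x y z = f y z x) {S : ι → Set M}
    (hS : Submodule.span R (⋃ i, S i) = ⊤)
    (h : ∀ i j k, i ≤ j → j ≤ k → ∀ x ∈ S i, ∀ y ∈ S j, ∀ z ∈ S k, f x y z = 0) :
    f = 0 := by
  refine ext_on hS fun x hx => ext_on hS fun y hy => ext_on hS fun z hz => ?_
  obtain ⟨i, hx⟩ := Set.mem_iUnion.mp hx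
  obtain ⟨j, hy⟩ := Set.mem_iUnion.mp hy
  obtain ⟨k, hz⟩ := Set.mem_iUnion.mp hz
  change f x y z = 0
  rcases le_total i j with hij | hji
  · rcases le_total j k with hjk | hkj
    · exact h i j k hij hjk x hx y hy z hz
    rcases le_total i k with hik | hki
    · rw [rotate x y z, swap y z x, ← rotate x z y, h i k j hik hkj x hx z hz y hy, neg_zero]
    · rw [← rotate, h k i j hki hij z hz x hx y hy]
  · rcases le_total i k with hik | hki
    · rw [swap, h j i k hji hik y hy x hx z hz, neg_zero]
    rcases le_total j k with hjk | hkj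
    · rw [rotate, h j k i hjk hki y hy z hz x hx]
    · rw [swap x y z, rotate y x z, rotate x z y, h k j i hkj hji z hz y hy x hx, neg_zero]

section CocycleDefect

variable {R L M : Type*} [CommRing R] [LieRing L] [LieAlgebra R L] [AddCommGroup M] [Module R M]

def cocycleDefect (c : L →ₗ[R] L →ₗ[R] M) : L →ₗ[R] L →ₗ[R] L →ₗ[R] M :=
  LinearMap.mk₂ R
    (fun X Y =>
      { toFun := fun Z => c ⁅X, Y⁆ Z + c ⁅Y, Z⁆ X + c ⁅Z, X⁆ Y
        map_add' := fun Z Z' => by simp only [lie_add, add_lie, map_add, LinearMap.add_apply]; abel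
        map_smul' := fun t Z => by simp [smul_add] })
    (fun X X' Y => by ext; simp; abel)
    (fun t X Y => by ext; simp [smul_add])
    (fun X Y Y' => by ext; simp; abel)
    (fun t X Y => by ext; simp [smul_add])

variable (c : L →ₗ[R] L →ₗ[R] M)

@[simp]
theorem cocycleDefect_apply (X Y Z : L) :
    cocycleDefect c X Y Z = c ⁅X, Y⁆ Z + c ⁅Y, Z⁆ X + c ⁅Z, X⁆ Y := rfl

theorem cocycleDefect_eq_zero_iff :
    cocycleDefect c = 0 ↔ ∀ X Y Z : L, c ⁅X, Y⁆ Z + c ⁅Y, Z⁆ X + c ⁅Z, X⁆ Y = 0 := by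
  simp only [LinearMap.ext_iff, cocycleDefect_apply, LinearMap.zero_apply]

theorem cocycleDefect_rotate (X Y Z : L) : cocycleDefect c X Y Z = cocycleDefect c Y Z X := by
  simp only [cocycleDefect_apply]
  abel

theorem cocycleDefect_swap (X Y Z : L) : cocycleDefect c X Y Z = -cocycleDefect c Y X Z := by
  simp only [cocycleDefect_apply, ← lie_skew Y X, ← lie_skew X Z, ← lie_skew Z Y, map_neg,
    LinearMap.neg_apply]
  abel

theorem cocycleDefect_self_left (X Z : L) : cocycleDefect c X X Z = 0 := by
  rw [cocycleDefect_apply, lie_self, ← lie_skew Z X, map_zero, map_neg]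
  simp only [LinearMap.zero_apply, LinearMap.neg_apply, zero_add, add_neg_cancel]

theorem cocycleDefect_self_right (X Y : L) : cocycleDefect c X Y Y = 0 := by
  rw [cocycleDefect_rotate]
  exact cocycleDefect_self_left c Y X

end CocycleDefect

section PSStructure

open Submodule

variable {H E : Fin r → 𝔰} {V : Fin r → Submodule ℝ 𝔰} {Ω : Fin r → 𝔰 →ₗ[ℝ] 𝔰 →ₗ[ℝ] ℝ}

theorem H_mem_psBlock (j : Fin r) : H j ∈ psBlock H E V j :=
  mem_sup_left (mem_sup_left (mem_span_singleton_self _))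

theorem E_mem_psBlock (j : Fin r) : E j ∈ psBlock H E V j :=
  mem_sup_right (mem_span_singleton_self _)

theorem V_le_psBlock (j : Fin r) : V j ≤ psBlock H E V j :=
  le_sup_of_le_left le_sup_right

theorem psBlock_le_psUpper {j k : Fin r} (h : j < k) : psBlock H E V k ≤ psUpper H E V j :=
  le_iSup₂_of_le k h le_rfl

theorem exists_eq_of_mem_psBlock {j : Fin r} {x : 𝔰} (hx : x ∈ psBlock H E V j) :
    ∃ a b : ℝ, ∃ v ∈ V j, x = a • H j + v + b • E j := by
  obtain ⟨y, hy, e, he, rfl⟩ := mem_sup.mp hx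
  obtain ⟨h, hh, v, hv, rfl⟩ := mem_sup.mp hy
  obtain ⟨a, rfl⟩ := mem_span_singleton.mp hh
  obtain ⟨b, rfl⟩ := mem_span_singleton.mp he
  exact ⟨a, b, v, hv, rfl⟩

theorem psUpper_induction {j : Fin r} {C : 𝔰 → Prop} {x : 𝔰} (hx : x ∈ psUpper H E V j)
    (block : ∀ k, j < k → ∀ y ∈ psBlock H E V k, C y) (zero : C 0)
    (add : ∀ y z, C y → C z → C (y + z)) : C x := by
  refine iSup_induction _ (motive := C) hx (fun k y hy => ?_) zero add
  by_cases h : j < k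
  · rw [iSup_pos h] at hy
    exact block k h y hy
  · rw [iSup_neg h, mem_bot] at hy
    exact hy ▸ zero

def psUpperNil (E : Fin r → 𝔰) (V : Fin r → Submodule ℝ 𝔰) (j : Fin r) : Submodule ℝ 𝔰 :=
  ⨆ k : Fin r, ⨆ _ : j < k, V k ⊔ span ℝ {E k}

theorem psUpperNil_le_psUpper (j : Fin r) : psUpperNil E V j ≤ psUpper H E V j :=
  iSup₂_mono fun _ _ => sup_le (V_le_psBlock _) le_sup_right

namespace IsPSAlgebra

theorem lie_H_V (P : IsPSAlgebra H E V Ω) (j : Fin r) {v : 𝔰} (hv : v ∈ V j) :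
    ⁅H j, v⁆ = v := by
  simpa using P.lie_H j v hv 0

theorem lie_H_E (P : IsPSAlgebra H E V Ω) (j : Fin r) : ⁅H j, E j⁆ = (2 : ℝ) • E j := by
  simpa using P.lie_H j 0 (V j).zero_mem 1

theorem E_lie_V (P : IsPSAlgebra H E V Ω) {j : Fin r} {v : 𝔰} (hv : v ∈ V j) :
    ⁅E j, v⁆ = 0 := by
  rw [← lie_skew, P.lie_vE j v hv, neg_zero]

theorem H_lie_eq_zero (P : IsPSAlgebra H E V Ω) {j : Fin r} {X : 𝔰}
    (hX : X ∈ psUpper H E V j) : ⁅H j, X⁆ = 0 := by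
  rw [← lie_skew, P.lie_upper_H j X hX, neg_zero]

theorem E_lie_eq_zero (P : IsPSAlgebra H E V Ω) {j : Fin r} {X : 𝔰}
    (hX : X ∈ psUpper H E V j) : ⁅E j, X⁆ = 0 := by
  rw [← lie_skew, P.lie_upper_E j X hX, neg_zero]

theorem lie_mem_V_of_mem_psUpper (P : IsPSAlgebra H E V Ω) {j : Fin r} {X y : 𝔰}
    (hX : X ∈ psUpper H E V j) (hy : y ∈ psBlock H E V j) : ⁅X, y⁆ ∈ V j := by
  obtain ⟨a, b, v, hv, rfl⟩ := exists_eq_of_mem_psBlock hy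
  simpa [P.lie_upper_H j X hX, P.lie_upper_E j X hX] using P.lie_upper_V j X hX v hv

theorem lie_mem_of_mem_psBlock (P : IsPSAlgebra H E V Ω) {j : Fin r} {x y : 𝔰}
    (hx : x ∈ psBlock H E V j) (hy : y ∈ psBlock H E V j) :
    ⁅x, y⁆ ∈ V j ⊔ span ℝ {E j} := by
  obtain ⟨a, b, v, hv, rfl⟩ := exists_eq_of_mem_psBlock hx
  obtain ⟨a', b', w, hw, rfl⟩ := exists_eq_of_mem_psBlock hy
  have expand : ⁅a • H j + v + b • E j, a' • H j + w + b' • E j⁆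
      = (a • w - a' • v) + (2 * (a * b') - 2 * (a' * b) + Ω j v w) • E j := by
    simp only [add_lie, lie_add, smul_lie, lie_smul, lie_self, ← lie_skew _ (H j),
      ← lie_skew (E j), P.lie_H_V j hv, P.lie_H_V j hw, P.lie_H_E j, P.lie_vv j v hv w hw,
      P.lie_vE j v hv, P.lie_vE j w hw]
    module
  rw [expand]
  exact add_mem (mem_sup_left (sub_mem (smul_mem _ _ hw) (smul_mem _ _ hv)))
    (mem_sup_right (smul_mem _ _ (mem_span_singleton_self _)))

theorem lie_mem_psUpperNil (P : IsPSAlgebra H E V Ω) {j : Fin r} {x y : 𝔰}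
    (hx : x ∈ psUpper H E V j) (hy : y ∈ psUpper H E V j) : ⁅x, y⁆ ∈ psUpperNil E V j := by
  have block_le {k : Fin r} (hk : j < k) : V k ⊔ span ℝ {E k} ≤ psUpperNil E V j :=
    le_iSup₂_of_le k hk le_rfl
  refine psUpper_induction (C := fun y => ⁅x, y⁆ ∈ psUpperNil E V j) hy
    (fun k hk y hy => ?_) (by simp) fun _ _ h h' => by rw [lie_add]; exact add_mem h h'
  refine psUpper_induction (C := fun x => ⁅x, y⁆ ∈ psUpperNil E V j) hx
    (fun l hl x hx => ?_) (by simp) fun _ _ h h' => by rw [add_lie]; exact add_mem h h'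
  rcases lt_trichotomy l k with hlk | rfl | hkl
  · rw [← lie_skew]
    exact neg_mem (block_le hl (mem_sup_left
      (P.lie_mem_V_of_mem_psUpper (psBlock_le_psUpper hlk hy) hx)))
  · exact block_le hl (P.lie_mem_of_mem_psBlock hx hy)
  · exact block_le hk (mem_sup_left (P.lie_mem_V_of_mem_psUpper (psBlock_le_psUpper hkl hx) hy))

end IsPSAlgebra

end PSStructure

section Cocycle

variable {H E : Fin r → 𝔰} {V : Fin r → Submodule ℝ 𝔰} {Ω : Fin r → 𝔰 →ₗ[ℝ] 𝔰 →ₗ[ℝ] ℝ}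
  {N : Type*} [AddCommGroup N] [Module ℝ N] {c : 𝔰 →ₗ[ℝ] 𝔰 →ₗ[ℝ] N}

/-- Conditions (i), (ii), (ii'), (iii). -/
structure SatisfiesPSCocycleConditions (H E : Fin r → 𝔰) (V : Fin r → Submodule ℝ 𝔰)
    (Ω : Fin r → 𝔰 →ₗ[ℝ] 𝔰 →ₗ[ℝ] ℝ) (c : 𝔰 →ₗ[ℝ] 𝔰 →ₗ[ℝ] N) : Prop where
  apply_V_E : ∀ j, ∀ v ∈ V j, c v (E j) = 0
  two_smul_apply_V_V : ∀ j, ∀ v ∈ V j, ∀ w ∈ V j, (2 : ℝ) • c v w = Ω j v w • c (H j) (E j)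
  apply_psUpper_E : ∀ j, ∀ X ∈ psUpper H E V j, c X (E j) = 0
  apply_psUpper_V : ∀ j, ∀ X ∈ psUpper H E V j, ∀ v ∈ V j, c X v = c (H j) ⁅X, v⁆
  apply_V_H : ∀ j k : Fin r, j < k → ∀ v ∈ V k, c v (H j) = 0
  apply_E_H : ∀ j k : Fin r, j < k → c (E k) (H j) = 0

theorem IsPSAlgebra.satisfiesPSCocycleConditions (P : IsPSAlgebra H E V Ω)
    (hanti : ∀ X Y, c X Y = -c Y X) (hc : cocycleDefect c = 0) :
    SatisfiesPSCocycleConditions H E V Ω c := by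
  have hc' (X Y Z : 𝔰) : c ⁅X, Y⁆ Z + c ⁅Y, Z⁆ X + c ⁅Z, X⁆ Y = 0 := by
    rw [← cocycleDefect_apply, hc]; rfl
  have upper {j k : Fin r} (h : j < k) {x : 𝔰} (hx : x ∈ psBlock H E V k) :
      ⁅x, H j⁆ = 0 := P.lie_upper_H j x (psBlock_le_psUpper h hx)
  constructor
  · intro j v hv
    have h := hc' (H j) v (E j)
    rw [P.lie_H_V j hv, P.lie_vE j v hv, ← lie_skew, P.lie_H_E] at h
    simp only [map_zero, map_neg, map_smul, LinearMap.zero_apply, LinearMap.neg_apply,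
      LinearMap.smul_apply] at h
    linear_combination (norm := module) (3 : ℝ)⁻¹ • (h + (2 : ℝ) • hanti (E j) v)
  · intro j v hv w hw
    have h := hc' (H j) v w
    rw [P.lie_H_V j hv, P.lie_vv j v hv w hw, ← lie_skew, P.lie_H_V j hw] at h
    simp only [map_neg, map_smul, LinearMap.neg_apply, LinearMap.smul_apply] at h
    linear_combination (norm := module) h - Ω j v w • hanti (E j) (H j) + hanti w v
  · intro j X hX
    have h := hc' X (H j) (E j)
    rw [P.lie_upper_H j X hX, P.lie_H_E, ← lie_skew, P.lie_upper_E j X hX] at h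
    simp only [map_zero, neg_zero, map_smul, LinearMap.zero_apply, LinearMap.smul_apply] at h
    linear_combination (norm := module) hanti X (E j) - (2 : ℝ)⁻¹ • h
  · intro j X hX v hv
    have h := hc' X (H j) v
    rw [P.lie_upper_H j X hX, P.lie_H_V j hv, ← lie_skew] at h
    simp only [map_zero, map_neg, LinearMap.zero_apply, LinearMap.neg_apply] at h
    linear_combination (norm := module) hanti X v - h - hanti (H j) ⁅X, v⁆
  · intro j k hjk v hv
    have h := hc' (H k) v (H j)
    rw [P.lie_H_V k hv, upper hjk (V_le_psBlock k hv), ← lie_skew,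
      upper hjk (H_mem_psBlock k)] at h
    simpa using h
  · intro j k hjk
    have h := hc' (H k) (E k) (H j)
    rw [P.lie_H_E, upper hjk (E_mem_psBlock k), ← lie_skew, upper hjk (H_mem_psBlock k)] at h
    simp only [map_zero, neg_zero, map_smul, LinearMap.zero_apply, LinearMap.smul_apply] at h
    linear_combination (norm := module) (2⁻¹ : ℝ) • h

end Cocycle

section Backward

variable {H E : Fin r → 𝔰} {V : Fin r → Submodule ℝ 𝔰} {Ω : Fin r → 𝔰 →ₗ[ℝ] 𝔰 →ₗ[ℝ] ℝ}
  {N : Type*} [AddCommGroup N] [Module ℝ N] {c : 𝔰 →ₗ[ℝ] 𝔰 →ₗ[ℝ] N}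

theorem IsPSAlgebra.cocycleDefect_V_V_E (P : IsPSAlgebra H E V Ω)
    (hanti : ∀ X Y, c X Y = -c Y X) {j : Fin r} {v w : 𝔰} (hv : v ∈ V j) (hw : w ∈ V j) :
    cocycleDefect c v w (E j) = 0 := by
  have hEE : c (E j) (E j) = 0 := by
    linear_combination (norm := module) (2 : ℝ)⁻¹ • hanti (E j) (E j)
  simp [P.lie_vv j v hv w hw, P.lie_vE j w hw, P.E_lie_V hv, hEE]

namespace SatisfiesPSCocycleConditions

theorem psUpperNil_le_ker (hc : SatisfiesPSCocycleConditions H E V Ω c) (j : Fin r) :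
    psUpperNil E V j ≤ LinearMap.ker (c.flip (H j)) :=
  iSup₂_le fun k hk => sup_le (fun v hv => hc.apply_V_H j k hk v hv)
    (Submodule.span_le.mpr (Set.singleton_subset_iff.mpr (hc.apply_E_H j k hk)))

theorem apply_E_V (hc : SatisfiesPSCocycleConditions H E V Ω c) (hanti : ∀ X Y, c X Y = -c Y X)
    {j : Fin r} {v : 𝔰} (hv : v ∈ V j) : c (E j) v = 0 := by
  rw [hanti, hc.apply_V_E j v hv, neg_zero]

theorem apply_E_psUpper (hc : SatisfiesPSCocycleConditions H E V Ω c)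
    (hanti : ∀ X Y, c X Y = -c Y X) {j : Fin r} {z : 𝔰} (hz : z ∈ psUpper H E V j) :
    c (E j) z = 0 := by
  rw [hanti, hc.apply_psUpper_E j z hz, neg_zero]

variable (hc : SatisfiesPSCocycleConditions H E V Ω c) (P : IsPSAlgebra H E V Ω)
  (hanti : ∀ X Y, c X Y = -c Y X) {j : Fin r}
include hc P

theorem cocycleDefect_H_psUpper_psUpper {y z : 𝔰} (hy : y ∈ psUpper H E V j)
    (hz : z ∈ psUpper H E V j) : cocycleDefect c (H j) y z = 0 := by
  simpa [P.H_lie_eq_zero hy, P.lie_upper_H j z hz] using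
    hc.psUpperNil_le_ker j (P.lie_mem_psUpperNil hy hz)

theorem cocycleDefect_E_psUpper_psUpper {y z : 𝔰} (hy : y ∈ psUpper H E V j)
    (hz : z ∈ psUpper H E V j) : cocycleDefect c (E j) y z = 0 := by
  simpa [P.E_lie_eq_zero hy, P.lie_upper_E j z hz] using
    hc.apply_psUpper_E j _ (psUpperNil_le_psUpper j (P.lie_mem_psUpperNil hy hz))

theorem cocycleDefect_V_E_psUpper {v z : 𝔰} (hv : v ∈ V j) (hz : z ∈ psUpper H E V j) :
    cocycleDefect c v (E j) z = 0 := by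
  simp [P.lie_vE j v hv, P.E_lie_eq_zero hz, hc.apply_V_E j _ (P.lie_upper_V j z hz v hv)]

include hanti

theorem cocycleDefect_V_psUpper_psUpper {v y z : 𝔰} (hv : v ∈ V j)
    (hy : y ∈ psUpper H E V j) (hz : z ∈ psUpper H E V j) : cocycleDefect c v y z = 0 := by
  have h₁ := hc.apply_psUpper_V j _ (psUpperNil_le_psUpper j (P.lie_mem_psUpperNil hy hz)) v hv
  have h₂ := hc.apply_psUpper_V j z hz _ (P.lie_upper_V j y hy v hv)
  have h₃ := hc.apply_psUpper_V j y hy _ (P.lie_upper_V j z hz v hv)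
  rw [cocycleDefect_apply, ← lie_skew v y, map_neg, LinearMap.neg_apply, hanti ⁅y, v⁆,
    hanti ⁅z, v⁆, h₁, h₂, h₃, leibniz_lie y z v, map_add]
  abel

theorem cocycleDefect_H_V_psUpper {v z : 𝔰} (hv : v ∈ V j) (hz : z ∈ psUpper H E V j) :
    cocycleDefect c (H j) v z = 0 := by
  simp only [cocycleDefect_apply, P.lie_H_V j hv, P.lie_upper_H j z hz, ← lie_skew v z,
    map_zero, map_neg, LinearMap.zero_apply, LinearMap.neg_apply, add_zero]
  linear_combination (norm := module)
    hanti v z - hc.apply_psUpper_V j z hz v hv - hanti ⁅z, v⁆ (H j)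

theorem cocycleDefect_H_E_psUpper {z : 𝔰} (hz : z ∈ psUpper H E V j) :
    cocycleDefect c (H j) (E j) z = 0 := by
  simp [P.lie_H_E, P.E_lie_eq_zero hz, P.lie_upper_H j z hz, hc.apply_E_psUpper hanti hz]

theorem cocycleDefect_V_V_psUpper {v w z : 𝔰} (hv : v ∈ V j) (hw : w ∈ V j)
    (hz : z ∈ psUpper H E V j) : cocycleDefect c v w z = 0 := by
  have h₁ := hc.two_smul_apply_V_V j _ (P.lie_upper_V j z hz v hv) w hw
  have h₂ := hc.two_smul_apply_V_V j v hv _ (P.lie_upper_V j z hz w hw)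
  have h₃ := congrArg (· • c (H j) (E j)) (P.omega_invar j z hz v hv w hw)
  simp only [add_smul, zero_smul] at h₃
  simp only [cocycleDefect_apply, P.lie_vv j v hv w hw, map_smul, LinearMap.smul_apply,
    hc.apply_E_psUpper hanti hz, smul_zero, zero_add, ← lie_skew w z, map_neg,
    LinearMap.neg_apply]
  linear_combination (norm := module) (2 : ℝ)⁻¹ • (h₁ + h₂ + h₃) - hanti ⁅z, w⁆ v

theorem cocycleDefect_H_V_V {v w : 𝔰} (hv : v ∈ V j) (hw : w ∈ V j) :
    cocycleDefect c (H j) v w = 0 := by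
  simp only [cocycleDefect_apply, P.lie_H_V j hv, P.lie_vv j v hv w hw, ← lie_skew w,
    P.lie_H_V j hw, map_smul, LinearMap.smul_apply, map_neg, LinearMap.neg_apply]
  linear_combination (norm := module) hc.two_smul_apply_V_V j v hv w hw
    + Ω j v w • hanti (E j) (H j) - hanti w v

theorem cocycleDefect_H_V_E {v : 𝔰} (hv : v ∈ V j) : cocycleDefect c (H j) v (E j) = 0 := by
  simp [P.lie_H_V j hv, P.lie_vE j v hv, ← lie_skew (E j), P.lie_H_E, hc.apply_V_E j v hv,
    hc.apply_E_V hanti hv]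

theorem cocycleDefect_V_V_V {u v w : 𝔰} (hu : u ∈ V j) (hv : v ∈ V j) (hw : w ∈ V j) :
    cocycleDefect c u v w = 0 := by
  simp [P.lie_vv j _ hu _ hv, P.lie_vv j _ hv _ hw, P.lie_vv j _ hw _ hu,
    hc.apply_E_V hanti hu, hc.apply_E_V hanti hv, hc.apply_E_V hanti hw]

end SatisfiesPSCocycleConditions

end Backward

section Generators

open Submodule

variable {H E : Fin r → 𝔰} {V : Fin r → Submodule ℝ 𝔰} {Ω : Fin r → 𝔰 →ₗ[ℝ] 𝔰 →ₗ[ℝ] ℝ}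

def psGen (H E : Fin r → 𝔰) (V : Fin r → Submodule ℝ 𝔰) (j : Fin r) : Fin 3 → Set 𝔰 :=
  ![{H j}, V j, {E j}]

theorem mem_psGen_iff {j : Fin r} {α : Fin 3} {x : 𝔰} :
    x ∈ psGen H E V j α ↔ α = 0 ∧ x = H j ∨ α = 1 ∧ x ∈ V j ∨ α = 2 ∧ x = E j := by
  fin_cases α <;> simp [psGen]

theorem psGen_subset_psBlock (j : Fin r) (α : Fin 3) : psGen H E V j α ⊆ psBlock H E V j := by
  intro x hx
  rcases mem_psGen_iff.mp hx with ⟨-, rfl⟩ | ⟨-, hx⟩ | ⟨-, rfl⟩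
  exacts [H_mem_psBlock j, V_le_psBlock j hx, E_mem_psBlock j]

theorem IsPSAlgebra.span_psGen (P : IsPSAlgebra H E V Ω) :
    span ℝ (⋃ p : Fin r ×ₗ Fin 3, psGen H E V (ofLex p).1 (ofLex p).2) = ⊤ := by
  rw [eq_top_iff, ← P.total]
  refine iSup_le fun j => ?_
  have gen_le (α : Fin 3) : psGen H E V j α ⊆
      span ℝ (⋃ p : Fin r ×ₗ Fin 3, psGen H E V (ofLex p).1 (ofLex p).2) :=
    (Set.subset_iUnion (fun p : Fin r ×ₗ Fin 3 => psGen H E V (ofLex p).1 (ofLex p).2)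
      (toLex (j, α))).trans subset_span
  exact sup_le (sup_le (span_le.mpr (gen_le 0)) (gen_le 1)) (span_le.mpr (gen_le 2))

end Generators

namespace SatisfiesPSCocycleConditions

variable {H E : Fin r → 𝔰} {V : Fin r → Submodule ℝ 𝔰} {Ω : Fin r → 𝔰 →ₗ[ℝ] 𝔰 →ₗ[ℝ] ℝ}
  {N : Type*} [AddCommGroup N] [Module ℝ N] {c : 𝔰 →ₗ[ℝ] 𝔰 →ₗ[ℝ] N}
  (hc : SatisfiesPSCocycleConditions H E V Ω c) (P : IsPSAlgebra H E V Ω)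
  (hanti : ∀ X Y, c X Y = -c Y X) {j : Fin r} {x y z : 𝔰}
include hc P hanti

theorem cocycleDefect_psGen_psUpper_psUpper {α : Fin 3} (hx : x ∈ psGen H E V j α)
    (hy : y ∈ psUpper H E V j) (hz : z ∈ psUpper H E V j) : cocycleDefect c x y z = 0 := by
  rcases mem_psGen_iff.mp hx with ⟨-, rfl⟩ | ⟨-, hx⟩ | ⟨-, rfl⟩
  · exact hc.cocycleDefect_H_psUpper_psUpper P hy hz
  · exact hc.cocycleDefect_V_psUpper_psUpper P hanti hx hy hz
  · exact hc.cocycleDefect_E_psUpper_psUpper P hy hz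

theorem cocycleDefect_psGen_psGen_psUpper {α β : Fin 3} (hαβ : α ≤ β)
    (hx : x ∈ psGen H E V j α) (hy : y ∈ psGen H E V j β) (hz : z ∈ psUpper H E V j) :
    cocycleDefect c x y z = 0 := by
  rcases mem_psGen_iff.mp hx with ⟨rfl, rfl⟩ | ⟨rfl, hx⟩ | ⟨rfl, rfl⟩ <;>
    rcases mem_psGen_iff.mp hy with ⟨rfl, rfl⟩ | ⟨rfl, hy⟩ | ⟨rfl, rfl⟩
  all_goals first
    | exact absurd hαβ (by decide)
    | exact cocycleDefect_self_left c _ _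
    | exact hc.cocycleDefect_H_V_psUpper P hanti hy hz
    | exact hc.cocycleDefect_H_E_psUpper P hanti hz
    | exact hc.cocycleDefect_V_V_psUpper P hanti hx hy hz
    | exact hc.cocycleDefect_V_E_psUpper P hx hz

theorem cocycleDefect_psGen_psGen_psGen {α β γ : Fin 3} (hαβ : α ≤ β) (hβγ : β ≤ γ)
    (hx : x ∈ psGen H E V j α) (hy : y ∈ psGen H E V j β) (hz : z ∈ psGen H E V j γ) :
    cocycleDefect c x y z = 0 := by
  rcases mem_psGen_iff.mp hx with ⟨rfl, rfl⟩ | ⟨rfl, hx⟩ | ⟨rfl, rfl⟩ <;>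
    rcases mem_psGen_iff.mp hy with ⟨rfl, rfl⟩ | ⟨rfl, hy⟩ | ⟨rfl, rfl⟩ <;>
    rcases mem_psGen_iff.mp hz with ⟨rfl, rfl⟩ | ⟨rfl, hz⟩ | ⟨rfl, rfl⟩
  all_goals first
    | exact absurd hαβ (by decide)
    | exact absurd hβγ (by decide)
    | exact cocycleDefect_self_left c _ _
    | exact cocycleDefect_self_right c _ _
    | exact hc.cocycleDefect_H_V_V P hanti hy hz
    | exact hc.cocycleDefect_H_V_E P hanti hy
    | exact hc.cocycleDefect_V_V_V P hanti hx hy hz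
    | exact P.cocycleDefect_V_V_E hanti hx hy

theorem cocycleDefect_eq_zero : cocycleDefect c = 0 := by
  refine LinearMap.eq_zero_of_apply_sorted_eq_zero _ (cocycleDefect_swap c)
    (cocycleDefect_rotate c) P.span_psGen ?_
  intro p q s hab hbd x hx y hy z hz
  obtain ⟨⟨a, α⟩, rfl⟩ := toLex.surjective p
  obtain ⟨⟨b, β⟩, rfl⟩ := toLex.surjective q
  obtain ⟨⟨d, γ⟩, rfl⟩ := toLex.surjective s
  simp only [Prod.Lex.toLex_le_toLex, ofLex_toLex] at hab hbd hx hy hz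
  have upper {a b : Fin r} (hab : a < b) {β : Fin 3} {y : 𝔰} (hy : y ∈ psGen H E V b β) :
      y ∈ psUpper H E V a :=
    psBlock_le_psUpper hab (psGen_subset_psBlock b β hy)
  rcases hab with hab | ⟨rfl, hαβ⟩
  · have hbd : b ≤ d := by rcases hbd with h | ⟨h, -⟩ <;> exact h.le
    exact hc.cocycleDefect_psGen_psUpper_psUpper P hanti hx (upper hab hy)
      (upper (hab.trans_le hbd) hz)
  rcases hbd with hbd | ⟨rfl, hβγ⟩
  · exact hc.cocycleDefect_psGen_psGen_psUpper P hanti hαβ hx hy (upper hbd hz)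
  · exact hc.cocycleDefect_psGen_psGen_psGen P hanti hαβ hβγ hx hy hz

end SatisfiesPSCocycleConditions

theorem IsPSAlgebra.cocycleDefect_eq_zero_iff {H E : Fin r → 𝔰} {V : Fin r → Submodule ℝ 𝔰}
    {Ω : Fin r → 𝔰 →ₗ[ℝ] 𝔰 →ₗ[ℝ] ℝ} {N : Type*} [AddCommGroup N] [Module ℝ N]
    {c : 𝔰 →ₗ[ℝ] 𝔰 →ₗ[ℝ] N} (P : IsPSAlgebra H E V Ω) (hanti : ∀ X Y, c X Y = -c Y X) :
    cocycleDefect c = 0 ↔ SatisfiesPSCocycleConditions H E V Ω c :=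
  ⟨P.satisfiesPSCocycleConditions hanti, fun hc => hc.cocycleDefect_eq_zero P hanti⟩

theorem statement8_general {r : ℕ} (𝔰 : Type) [LieRing 𝔰] [LieAlgebra ℝ 𝔰]
    (H E : Fin r → 𝔰) (V : Fin r → Submodule ℝ 𝔰) (Ω : Fin r → 𝔰 →ₗ[ℝ] 𝔰 →ₗ[ℝ] ℝ)
    (P : IsPSAlgebra H E V Ω)
    (c : 𝔰 →ₗ[ℝ] 𝔰 →ₗ[ℝ] ℂ) (hanti : ∀ X Y : 𝔰, c X Y = - c Y X) :
    (∀ X Y Z : 𝔰, c ⁅X, Y⁆ Z + c ⁅Y, Z⁆ X + c ⁅Z, X⁆ Y = 0) ↔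
      -- (i)
      ((∀ j, ∀ v ∈ V j, c v (E j) = 0) ∧
       (∀ j, ∀ v ∈ V j, ∀ v' ∈ V j, (2 : ℂ) * c v v' = Ω j v v' • c (H j) (E j)) ∧
       -- (ii)
       (∀ j, ∀ X ∈ psUpper H E V j, c X (E j) = 0) ∧
       -- (ii')
       (∀ j, ∀ X ∈ psUpper H E V j, ∀ v ∈ V j, c X v = c (H j) ⁅X, v⁆) ∧
       -- (iii)
       (∀ j k : Fin r, j < k → ∀ v ∈ V k, c v (H j) = 0) ∧
       (∀ j k : Fin r, j < k → c (E k) (H j) = 0)) := by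
  have two_smul_eq (z : ℂ) : (2 : ℝ) • z = 2 * z := by rw [Complex.real_smul]; norm_num
  rw [← cocycleDefect_eq_zero_iff, P.cocycleDefect_eq_zero_iff hanti]
  constructor
  · rintro ⟨h₁, h₂, h₃, h₄, h₅, h₆⟩
    exact ⟨h₁, fun j v hv w hw => two_smul_eq _ ▸ h₂ j v hv w hw, h₃, h₄, h₅, h₆⟩
  · rintro ⟨h₁, h₂, h₃, h₄, h₅, h₆⟩
    exact ⟨h₁, fun j v hv w hw => (two_smul_eq _).symm ▸ h₂ j v hv w hw, h₃, h₄, h₅, h₆⟩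

/-- An antisymmetric `ℝ`-bilinear map `c : 𝔰 × 𝔰 → ℂ` is a Chevalley–Eilenberg
2-cocycle (trivial coefficients) if and only if it satisfies conditions (i), (ii), (ii'),
(iii) of Lemma 3.3 of the paper. -/
theorem statement8 {r : ℕ} (𝔰 : Type) [LieRing 𝔰] [LieAlgebra ℝ 𝔰] [Module.Finite ℝ 𝔰]
    (H E : Fin r → 𝔰) (V : Fin r → Submodule ℝ 𝔰) (Ω : Fin r → 𝔰 →ₗ[ℝ] 𝔰 →ₗ[ℝ] ℝ)
    (P : IsPSAlgebra H E V Ω)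
    (c : 𝔰 →ₗ[ℝ] 𝔰 →ₗ[ℝ] ℂ) (hanti : ∀ X Y : 𝔰, c X Y = - c Y X) :
    (∀ X Y Z : 𝔰, c ⁅X, Y⁆ Z + c ⁅Y, Z⁆ X + c ⁅Z, X⁆ Y = 0) ↔
      -- (i)
      ((∀ j, ∀ v ∈ V j, c v (E j) = 0) ∧
       (∀ j, ∀ v ∈ V j, ∀ v' ∈ V j, (2 : ℂ) * c v v' = Ω j v v' • c (H j) (E j)) ∧
       -- (ii)
       (∀ j, ∀ X ∈ psUpper H E V j, c X (E j) = 0) ∧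
       -- (ii')
       (∀ j, ∀ X ∈ psUpper H E V j, ∀ v ∈ V j, c X v = c (H j) ⁅X, v⁆) ∧
       -- (iii)
       (∀ j k : Fin r, j < k → ∀ v ∈ V k, c v (H j) = 0) ∧
       (∀ j k : Fin r, j < k → c (E k) (H j) = 0)) :=
  statement8_general 𝔰 H E V Ω P c hanti
end

section
/- For every choice of ℝ-linear maps c_j : V_j ⊕ ℝE_j → ℂ (1 ≤ j ≤ r) and of constants c_{jk} ∈ ℂ (1 ≤ j < k ≤ r), there exists a unique Chevalley–Eilenberg 2-cocycle c : 𝔰 × 𝔰 → ℂ for the trivial representation of 𝔰 on ℂ such that c(H_j, X) = c_j(X) for all 1 ≤ j ≤ r and X ∈ V_j ⊕ ℝE_j, and c(H_j, H_k) = c_{jk} for all 1 ≤ j < k ≤ r. -/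
variable {r : ℕ} {𝔰 : Type} [LieRing 𝔰] [LieAlgebra ℝ 𝔰]

namespace PSaux

lemma skew (x y : 𝔰) : ⁅x, y⁆ = -⁅y, x⁆ := (lie_skew x y).symm

variable {H E : Fin r → 𝔰} {V : Fin r → Submodule ℝ 𝔰} {Ω : Fin r → 𝔰 →ₗ[ℝ] 𝔰 →ₗ[ℝ] ℝ}

lemma H_mem (j : Fin r) : H j ∈ psBlock H E V j :=
  Submodule.mem_sup_left (Submodule.mem_sup_left (Submodule.mem_span_singleton_self _))

lemma E_mem (j : Fin r) : E j ∈ psBlock H E V j :=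
  Submodule.mem_sup_right (Submodule.mem_span_singleton_self _)

lemma V_le (j : Fin r) : V j ≤ psBlock H E V j :=
  le_trans le_sup_right le_sup_left

lemma block_le_upper {j k : Fin r} (h : j < k) : psBlock H E V k ≤ psUpper H E V j := by
  refine le_trans ?_ (le_iSup _ k)
  exact le_iSup (fun _ : j < k => psBlock H E V k) h

lemma H_upper {j k : Fin r} (h : j < k) : H k ∈ psUpper H E V j := block_le_upper h (H_mem k)
lemma E_upper {j k : Fin r} (h : j < k) : E k ∈ psUpper H E V j := block_le_upper h (E_mem k)
lemma V_upper {j k : Fin r} (h : j < k) {v : 𝔰} (hv : v ∈ V k) : v ∈ psUpper H E V j :=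
  block_le_upper h (V_le k hv)

section
variable (P : IsPSAlgebra H E V Ω)
include P

lemma lieHH (j k : Fin r) : ⁅H j, H k⁆ = 0 := by
  rcases lt_trichotomy j k with h | h | h
  · rw [skew, P.lie_upper_H j (H k) (H_upper h), neg_zero]
  · rw [h, lie_self]
  · exact P.lie_upper_H k (H j) (H_upper h)

lemma lieHEd (j : Fin r) : ⁅H j, E j⁆ = (2 : ℝ) • E j := by
  have h := P.lie_H j 0 (V j).zero_mem 1
  simpa using h

lemma lieHE {j k : Fin r} (h : j ≠ k) : ⁅H j, E k⁆ = 0 := by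
  rcases h.lt_or_gt with h | h
  · rw [skew, P.lie_upper_H j (E k) (E_upper h), neg_zero]
  · exact P.lie_upper_E k (H j) (H_upper h)

lemma lieHV (j : Fin r) {v : 𝔰} (hv : v ∈ V j) : ⁅H j, v⁆ = v := by
  have h := P.lie_H j v hv 0
  simpa using h

lemma lieHVlt {j k : Fin r} (h : j < k) {v : 𝔰} (hv : v ∈ V k) : ⁅H j, v⁆ = 0 := by
  rw [skew, P.lie_upper_H j v (V_upper h hv), neg_zero]

lemma lieHVgt {j k : Fin r} (h : k < j) {v : 𝔰} (hv : v ∈ V k) : ⁅H j, v⁆ ∈ V k :=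
  P.lie_upper_V k (H j) (H_upper h) v hv

lemma lieEE (j k : Fin r) : ⁅E j, E k⁆ = 0 := by
  rcases lt_trichotomy j k with h | h | h
  · rw [skew, P.lie_upper_E j (E k) (E_upper h), neg_zero]
  · rw [h, lie_self]
  · exact P.lie_upper_E k (E j) (E_upper h)

lemma lieEVle {j k : Fin r} (h : j ≤ k) {v : 𝔰} (hv : v ∈ V k) : ⁅E j, v⁆ = 0 := by
  rcases eq_or_lt_of_le h with h | h
  · subst h; rw [skew, P.lie_vE j v hv, neg_zero]
  · rw [skew, P.lie_upper_E j v (V_upper h hv), neg_zero]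

lemma lieEVgt {j k : Fin r} (h : k < j) {v : 𝔰} (hv : v ∈ V k) : ⁅E j, v⁆ ∈ V k :=
  P.lie_upper_V k (E j) (E_upper h) v hv

lemma lieVVlt {j k : Fin r} (h : j < k) {v w : 𝔰} (hv : v ∈ V j) (hw : w ∈ V k) :
    ⁅w, v⁆ ∈ V j :=
  P.lie_upper_V j w (V_upper h hw) v hv

lemma gen_span {p : Submodule ℝ 𝔰} (hH : ∀ k, H k ∈ p) (hE : ∀ k, E k ∈ p)
    (hV : ∀ k, V k ≤ p) (x : 𝔰) : x ∈ p := by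
  have h : (⊤ : Submodule ℝ 𝔰) ≤ p := by
    rw [← P.total]
    refine iSup_le fun k => ?_
    simp only [psBlock]
    refine sup_le (sup_le ?_ (hV k)) ?_ <;> rw [Submodule.span_le, Set.singleton_subset_iff]
    exacts [hH k, hE k]
  exact h trivial

lemma cocycle_unique (d : 𝔰 →ₗ[ℝ] 𝔰 →ₗ[ℝ] ℂ) (hd : IsCE2Cocycle d)
    (h1 : ∀ j, ∀ x ∈ V j ⊔ Submodule.span ℝ {E j}, d (H j) x = 0)
    (h2 : ∀ j k : Fin r, j < k → d (H j) (H k) = 0) : d = 0 := by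
  obtain ⟨ha, hj⟩ := hd
  have h1V : ∀ j, ∀ v ∈ V j, d (H j) v = 0 := fun j v hv => h1 j v (Submodule.mem_sup_left hv)
  have h1E : ∀ j, d (H j) (E j) = 0 := fun j =>
    h1 j (E j) (Submodule.mem_sup_right (Submodule.mem_span_singleton_self _))
  have hself : ∀ X, d X X = 0 := fun X => by have h := ha X X; linear_combination h / 2
  have dHH : ∀ j k, d (H j) (H k) = 0 := by
    intro j k
    rcases lt_trichotomy j k with h | h | h
    · exact h2 j k h
    · rw [h]; exact hself _
    · rw [ha, h2 k j h]; ring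
  have dEH : ∀ j k, d (E j) (H k) = 0 := by
    intro j k
    by_cases h : k = j
    · subst h; rw [ha, h1E]; ring
    · have jac := hj (H j) (E j) (H k)
      rw [lieHEd P j,
        show ⁅E j, H k⁆ = 0 from by rw [skew, lieHE P h, neg_zero],
        lieHH P k j] at jac
      simp only [map_smul, LinearMap.smul_apply, map_zero, LinearMap.zero_apply,
        add_zero] at jac
      rcases smul_eq_zero.mp jac with h' | h'
      · norm_num at h'
      · exact h'
  have dHE : ∀ j k, d (H j) (E k) = 0 := fun j k => by rw [ha, dEH]; ring
  have dVH : ∀ (k j : Fin r), ∀ v ∈ V k, d v (H j) = 0 := by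
    intro k j v hv
    by_cases h : j = k
    · subst h; rw [ha, h1V j v hv]; ring
    · have jac := hj (H k) v (H j)
      rw [lieHV P k hv, lieHH P j k] at jac
      rcases Ne.lt_or_gt h with hlt | hlt
      · rw [show ⁅v, H j⁆ = 0 from by rw [skew, lieHVlt P hlt hv, neg_zero]] at jac
        simpa using jac
      · have hw0 : d ⁅H j, v⁆ (H k) = 0 := by
          rw [ha, h1V k _ (lieHVgt P hlt hv)]; ring
        rw [skew v (H j)] at jac
        simp only [map_neg, LinearMap.neg_apply, hw0, map_zero, LinearMap.zero_apply,
          neg_zero, add_zero] at jac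
        exact jac
  have dHV : ∀ (j k : Fin r), ∀ v ∈ V k, d (H j) v = 0 := by
    intro j k v hv; rw [ha, dVH k j v hv]; ring
  have dEE : ∀ j k, d (E j) (E k) = 0 := by
    have key : ∀ j k, j < k → d (E j) (E k) = 0 := by
      intro j k h
      have jac := hj (H j) (E j) (E k)
      rw [lieHEd P j, lieEE P j k,
        show ⁅E k, H j⁆ = 0 from by rw [skew, lieHE P h.ne, neg_zero]] at jac
      simp only [map_smul, LinearMap.smul_apply, map_zero, LinearMap.zero_apply,
        add_zero] at jac
      rcases smul_eq_zero.mp jac with h' | h'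
      · norm_num at h'
      · exact h'
    intro j k
    rcases lt_trichotomy j k with h | h | h
    · exact key j k h
    · rw [h]; exact hself _
    · rw [ha, key k j h]; ring
  have dVE : ∀ (k j : Fin r), ∀ v ∈ V k, d v (E j) = 0 := by
    intro k j v hv
    rcases lt_trichotomy j k with h | h | h
    · -- j < k
      have jac := hj (H j) (E j) v
      rw [lieHEd P j, lieEVle P h.le hv, P.lie_upper_H j v (V_upper h hv)] at jac
      simp only [map_smul, LinearMap.smul_apply, map_zero, LinearMap.zero_apply,
        add_zero] at jac
      rcases smul_eq_zero.mp jac with h' | h'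
      · norm_num at h'
      · rw [ha, h']; ring
    · -- j = k
      subst h
      have jac := hj (H j) (E j) v
      rw [lieHEd P j,
        show ⁅E j, v⁆ = 0 from lieEVle P le_rfl hv,
        show ⁅v, H j⁆ = -v from by rw [skew, lieHV P j hv]] at jac
      simp only [map_smul, LinearMap.smul_apply, map_zero, LinearMap.zero_apply,
        map_neg, LinearMap.neg_apply, add_zero, zero_add] at jac
      have hsym := ha v (E j)
      rw [Complex.real_smul] at jac
      push_cast at jac
      linear_combination (-1 / 3 : ℂ) * jac + (2 / 3 : ℂ) * hsym
    · -- k < j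
      have jac := hj (H k) v (E j)
      rw [lieHV P k hv,
        show ⁅E j, H k⁆ = 0 from P.lie_upper_H k (E j) (E_upper h),
        skew v (E j)] at jac
      have hw0 : d ⁅E j, v⁆ (H k) = 0 := by
        rw [ha, h1V k _ (lieEVgt P h hv)]; ring
      simp only [map_neg, LinearMap.neg_apply, hw0, map_zero, LinearMap.zero_apply,
        neg_zero, add_zero] at jac
      exact jac
  have dEV : ∀ (j k : Fin r), ∀ v ∈ V k, d (E j) v = 0 := by
    intro j k v hv; rw [ha, dVE k j v hv]; ring
  have dVV : ∀ (j k : Fin r), ∀ v ∈ V j, ∀ w ∈ V k, d v w = 0 := by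
    have key : ∀ (j k : Fin r), j < k → ∀ v ∈ V j, ∀ w ∈ V k, d v w = 0 := by
      intro j k h v hv w hw
      have jac := hj (H j) v w
      have hu0 : d ⁅w, v⁆ (H j) = 0 := dVH j j _ (lieVVlt P h hv hw)
      rw [lieHV P j hv,
        show ⁅w, H j⁆ = 0 from P.lie_upper_H j w (V_upper h hw),
        skew v w] at jac
      simp only [map_neg, LinearMap.neg_apply, hu0, map_zero, LinearMap.zero_apply,
        neg_zero, add_zero] at jac
      exact jac
    have diag : ∀ (j : Fin r), ∀ v ∈ V j, ∀ w ∈ V j, d v w = 0 := by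
      intro j v hv w hw
      have jac := hj (H j) v w
      rw [lieHV P j hv, P.lie_vv j v hv w hw,
        show ⁅w, H j⁆ = -w from by rw [skew, lieHV P j hw]] at jac
      have hEH : d (E j) (H j) = 0 := dEH j j
      simp only [map_smul, LinearMap.smul_apply, hEH, smul_zero, map_neg,
        LinearMap.neg_apply, add_zero] at jac
      have hsym := ha w v
      linear_combination (1 / 2 : ℂ) * jac + (1 / 2 : ℂ) * hsym
    intro j k v hv w hw
    rcases lt_trichotomy j k with h | h | h
    · exact key j k h v hv w hw
    · subst h; exact diag j v hv w hw
    · rw [ha, key k j h w hw v hv]; ring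
  have gen0 : ∀ x : 𝔰, ((∃ j, x = H j) ∨ (∃ j, x = E j) ∨ ∃ j, x ∈ V j) → d x = 0 := by
    rintro x hx
    refine LinearMap.ext fun y => ?_
    have hy : y ∈ LinearMap.ker (d x) := by
      refine gen_span P ?_ ?_ ?_ y
      · intro k
        rcases hx with ⟨j, rfl⟩ | ⟨j, rfl⟩ | ⟨j, hxv⟩
        exacts [LinearMap.mem_ker.mpr (dHH j k), LinearMap.mem_ker.mpr (dEH j k),
          LinearMap.mem_ker.mpr (dVH j k x hxv)]
      · intro k
        rcases hx with ⟨j, rfl⟩ | ⟨j, rfl⟩ | ⟨j, hxv⟩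
        exacts [LinearMap.mem_ker.mpr (dHE j k), LinearMap.mem_ker.mpr (dEE j k),
          LinearMap.mem_ker.mpr (dVE j k x hxv)]
      · intro k w hw
        rcases hx with ⟨j, rfl⟩ | ⟨j, rfl⟩ | ⟨j, hxv⟩
        exacts [LinearMap.mem_ker.mpr (dHV j k w hw), LinearMap.mem_ker.mpr (dEV j k w hw),
          LinearMap.mem_ker.mpr (dVV j k x hxv w hw)]
    simpa using LinearMap.mem_ker.mp hy
  refine LinearMap.ext fun X => ?_
  have hX : X ∈ LinearMap.ker d := by
    refine gen_span P ?_ ?_ ?_ X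
    · exact fun k => LinearMap.mem_ker.mpr (gen0 (H k) (Or.inl ⟨k, rfl⟩))
    · exact fun k => LinearMap.mem_ker.mpr (gen0 (E k) (Or.inr (Or.inl ⟨k, rfl⟩)))
    · exact fun k w hw => LinearMap.mem_ker.mpr (gen0 w (Or.inr (Or.inr ⟨k, hw⟩)))
  simpa using LinearMap.mem_ker.mp hX

end
end PSaux
section Part2
namespace PSaux

variable {r : ℕ} {𝔰 : Type} [LieRing 𝔰] [LieAlgebra ℝ 𝔰]
variable {H E : Fin r → 𝔰} {V : Fin r → Submodule ℝ 𝔰} {Ω : Fin r → 𝔰 →ₗ[ℝ] 𝔰 →ₗ[ℝ] ℝ}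

/-- generators of `𝔰` -/
def isGen (H E : Fin r → 𝔰) (V : Fin r → Submodule ℝ 𝔰) (x : 𝔰) : Prop :=
  (∃ j, x = H j) ∨ (∃ j, x = E j) ∨ ∃ j, x ∈ V j

/-- left adjoint action as a linear map -/
def adL (X : 𝔰) : 𝔰 →ₗ[ℝ] 𝔰 :=
  { toFun := fun y => ⁅X, y⁆, map_add' := lie_add X, map_smul' := fun t y => lie_smul t X y }

/-- right bracket as a linear map -/
def adR (Y : 𝔰) : 𝔰 →ₗ[ℝ] 𝔰 :=
  { toFun := fun x => ⁅x, Y⁆, map_add' := fun a b => add_lie a b Y,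
    map_smul' := fun t x => smul_lie t x Y }

@[simp] lemma adL_apply (X y : 𝔰) : adL X y = ⁅X, y⁆ := rfl
@[simp] lemma adR_apply (Y x : 𝔰) : adR Y x = ⁅x, Y⁆ := rfl

lemma W_le_block (j : Fin r) : V j ⊔ Submodule.span ℝ {E j} ≤ psBlock H E V j := by
  simp only [psBlock]
  exact sup_le (le_trans le_sup_right le_sup_left) le_sup_right

lemma spanH_le_block (j : Fin r) :
    Submodule.span ℝ {H j} ≤ psBlock H E V j := le_trans le_sup_left le_sup_left

lemma block_le_others {j k : Fin r} (h : k ≠ j) :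
    psBlock H E V k ≤ ⨆ k, ⨆ _ : k ≠ j, psBlock H E V k :=
  le_trans (le_iSup (fun _ : k ≠ j => psBlock H E V k) h)
    (le_iSup (fun k => ⨆ _ : k ≠ j, psBlock H E V k) k)

section
variable (P : IsPSAlgebra H E V Ω)
include P

lemma bracket_mem (X Y : 𝔰) :
    ⁅X, Y⁆ ∈ ⨆ k, (V k ⊔ Submodule.span ℝ {E k}) := by
  set N : Submodule ℝ 𝔰 := ⨆ k, (V k ⊔ Submodule.span ℝ {E k}) with hN
  have hEN : ∀ k : Fin r, E k ∈ N := fun k =>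
    (le_iSup (fun k => V k ⊔ Submodule.span ℝ {E k}) k)
      (Submodule.mem_sup_right (Submodule.mem_span_singleton_self _))
  have hVN : ∀ k : Fin r, V k ≤ N := fun k =>
    le_trans le_sup_left (le_iSup (fun k => V k ⊔ Submodule.span ℝ {E k}) k)
  have gen2 : ∀ x : 𝔰, isGen H E V x → ∀ y : 𝔰, isGen H E V y → ⁅x, y⁆ ∈ N := by
    rintro x (⟨j, rfl⟩ | ⟨j, rfl⟩ | ⟨j, hx⟩) y (⟨k, rfl⟩ | ⟨k, rfl⟩ | ⟨k, hy⟩)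
    · rw [lieHH P j k]; exact N.zero_mem
    · by_cases h : j = k
      · subst h; rw [lieHEd P j]; exact N.smul_mem _ (hEN j)
      · rw [lieHE P h]; exact N.zero_mem
    · rcases lt_trichotomy j k with h | h | h
      · rw [lieHVlt P h hy]; exact N.zero_mem
      · subst h; rw [lieHV P j hy]; exact hVN j hy
      · exact hVN k (lieHVgt P h hy)
    · rw [skew]
      by_cases h : k = j
      · subst h; rw [lieHEd P k]; exact N.neg_mem (N.smul_mem _ (hEN k))
      · rw [lieHE P h, neg_zero]; exact N.zero_mem
    · rw [lieEE P j k]; exact N.zero_mem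
    · rcases le_or_gt j k with h | h
      · rw [lieEVle P h hy]; exact N.zero_mem
      · exact hVN k (lieEVgt P h hy)
    · rw [skew]
      rcases lt_trichotomy k j with h | h | h
      · rw [lieHVlt P h hx, neg_zero]; exact N.zero_mem
      · subst h; rw [lieHV P k hx]; exact N.neg_mem (hVN k hx)
      · exact N.neg_mem (hVN j (lieHVgt P h hx))
    · rw [skew]
      rcases le_or_gt k j with h | h
      · rw [lieEVle P h hx, neg_zero]; exact N.zero_mem
      · exact N.neg_mem (hVN j (lieEVgt P h hx))
    · rcases lt_trichotomy j k with h | h | h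
      · rw [skew]; exact N.neg_mem (hVN j (lieVVlt P h hx hy))
      · subst h; rw [P.lie_vv j x hx y hy]; exact N.smul_mem _ (hEN j)
      · exact hVN k (lieVVlt P h hy hx)
  have gen1 : ∀ x : 𝔰, isGen H E V x → ∀ Y : 𝔰, ⁅x, Y⁆ ∈ N := by
    intro x hx Y
    have hY : Y ∈ Submodule.comap (adL x) N := by
      refine gen_span P ?_ ?_ ?_ Y
      · exact fun k => Submodule.mem_comap.mpr (gen2 x hx (H k) (Or.inl ⟨k, rfl⟩))
      · exact fun k => Submodule.mem_comap.mpr (gen2 x hx (E k) (Or.inr (Or.inl ⟨k, rfl⟩)))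
      · exact fun k w hw => Submodule.mem_comap.mpr (gen2 x hx w (Or.inr (Or.inr ⟨k, hw⟩)))
    exact Submodule.mem_comap.mp hY
  have hX : X ∈ Submodule.comap (adR Y) N := by
    refine gen_span P ?_ ?_ ?_ X
    · exact fun k => Submodule.mem_comap.mpr (gen1 (H k) (Or.inl ⟨k, rfl⟩) Y)
    · exact fun k => Submodule.mem_comap.mpr (gen1 (E k) (Or.inr (Or.inl ⟨k, rfl⟩)) Y)
    · exact fun k w hw => Submodule.mem_comap.mpr (gen1 w (Or.inr (Or.inr ⟨k, hw⟩)) Y)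
  exact Submodule.mem_comap.mp hX

lemma H_ne (j : Fin r) : H j ≠ 0 := by
  intro h0
  have h := P.inner_indep j 1 0 0 (V j).zero_mem (by simp [h0])
  exact one_ne_zero h.1

lemma piece_zero (j : Fin r) {x : 𝔰} (hx : x ∈ psBlock H E V j)
    (hx' : x ∈ ⨆ k, ⨆ _ : k ≠ j, psBlock H E V k) : x = 0 :=
  Submodule.disjoint_def.mp (P.indep j) x hx hx'

lemma codis (j : Fin r) {A B : Submodule ℝ 𝔰} (hAB : psBlock H E V j ≤ A ⊔ B)
    (hB : (⨆ k, ⨆ _ : k ≠ j, psBlock H E V k) ≤ B) : Codisjoint A B := by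
  rw [codisjoint_iff, eq_top_iff, ← P.total]
  refine iSup_le fun k => ?_
  by_cases h : k = j
  · subst h; exact hAB
  · exact le_trans (le_trans (block_le_others h) hB) le_sup_right

lemma isCompl_W (j : Fin r) :
    IsCompl (V j ⊔ Submodule.span ℝ {E j})
      (Submodule.span ℝ {H j} ⊔ ⨆ k, ⨆ _ : k ≠ j, psBlock H E V k) := by
  constructor
  · refine Submodule.disjoint_def.mpr fun x hxW hxB => ?_
    rcases Submodule.mem_sup.mp hxB with ⟨s, hs, y, hy, rfl⟩
    obtain ⟨a, rfl⟩ := Submodule.mem_span_singleton.mp hs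
    have hyb : y ∈ psBlock H E V j := by
      have h' : (a • H j + y) - a • H j ∈ psBlock H E V j :=
        Submodule.sub_mem _ (W_le_block j hxW) (Submodule.smul_mem _ _ (H_mem j))
      simpa using h'
    have hy0 : y = 0 := piece_zero P j hyb hy
    rcases Submodule.mem_sup.mp (show a • H j ∈ V j ⊔ Submodule.span ℝ {E j} by
      simpa [hy0] using hxW) with ⟨v, hv, e, he, hva⟩
    obtain ⟨b, rfl⟩ := Submodule.mem_span_singleton.mp he
    have h0 : a • H j + -v + (-b) • E j = 0 := by
      rw [← hva]; module
    have h3 := P.inner_indep j a (-b) (-v) ((V j).neg_mem hv) h0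
    rw [hy0, h3.1, zero_smul, zero_add]
  · refine codis P j ?_ le_sup_right
    simp only [psBlock]
    refine sup_le (sup_le ?_ ?_) ?_
    · exact le_trans le_sup_left le_sup_right
    · exact le_trans le_sup_left le_sup_left
    · exact le_trans le_sup_right le_sup_left

lemma isCompl_H (j : Fin r) :
    IsCompl (Submodule.span ℝ {H j})
      ((V j ⊔ Submodule.span ℝ {E j}) ⊔ ⨆ k, ⨆ _ : k ≠ j, psBlock H E V k) := by
  constructor
  · refine Submodule.disjoint_def.mpr fun x hxA hxB => ?_
    obtain ⟨a, rfl⟩ := Submodule.mem_span_singleton.mp hxA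
    rcases Submodule.mem_sup.mp hxB with ⟨w, hw, y, hy, hwy⟩
    have hyb : y ∈ psBlock H E V j := by
      have h' : (a • H j) - w ∈ psBlock H E V j :=
        Submodule.sub_mem _ (Submodule.smul_mem _ _ (H_mem j)) (W_le_block j hw)
      have h'' : (a • H j) - w = y := by rw [← hwy]; abel
      rwa [h''] at h'
    have hy0 : y = 0 := piece_zero P j hyb hy
    have hww : a • H j = w := by rw [← hwy, hy0, add_zero]
    rcases Submodule.mem_sup.mp (hww ▸ hw) with ⟨v, hv, e, he, hva⟩
    obtain ⟨b, rfl⟩ := Submodule.mem_span_singleton.mp he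
    have h0 : a • H j + -v + (-b) • E j = 0 := by
      rw [← hva]; module
    have h3 := P.inner_indep j a (-b) (-v) ((V j).neg_mem hv) h0
    rw [h3.1, zero_smul]
  · refine codis P j ?_ le_sup_right
    simp only [psBlock]
    refine sup_le (sup_le ?_ ?_) ?_
    · exact le_sup_left
    · exact le_trans (le_trans le_sup_left le_sup_left) le_sup_right
    · exact le_trans (le_trans le_sup_right le_sup_left) le_sup_right

lemma exists_h : ∃ h : Fin r → (𝔰 →ₗ[ℝ] ℝ),
    (∀ j, h j (H j) = 1) ∧ (∀ j k, j ≠ k → h j (H k) = 0) ∧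
    (∀ j k, ∀ x ∈ V k ⊔ Submodule.span ℝ {E k}, h j x = 0) := by
  have key : ∀ j : Fin r, ∃ f : 𝔰 →ₗ[ℝ] ℝ, f (H j) = 1 ∧
      (∀ k, k ≠ j → ∀ x ∈ psBlock H E V k, f x = 0) ∧
      (∀ x ∈ V j ⊔ Submodule.span ℝ {E j}, f x = 0) := by
    intro j
    have hc := isCompl_H P j
    refine ⟨LinearMap.ofIsCompl hc
      (LinearEquiv.coord ℝ 𝔰 (H j) (H_ne P j)).toLinearMap 0, ?_, ?_, ?_⟩
    · have h' := LinearMap.ofIsCompl_left_apply hc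
        (φ := (LinearEquiv.coord ℝ 𝔰 (H j) (H_ne P j)).toLinearMap) (ψ := 0)
        ⟨H j, Submodule.mem_span_singleton_self _⟩
      exact h'.trans (LinearEquiv.coord_self ℝ 𝔰 (H j) (H_ne P j))
    · intro k hk x hx
      have hxB : x ∈ (V j ⊔ Submodule.span ℝ {E j}) ⊔ ⨆ k, ⨆ _ : k ≠ j, psBlock H E V k :=
        Submodule.mem_sup_right (block_le_others hk hx)
      have h' := LinearMap.ofIsCompl_right_apply hc
        (φ := (LinearEquiv.coord ℝ 𝔰 (H j) (H_ne P j)).toLinearMap) (ψ := 0) ⟨x, hxB⟩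
      simpa using h'
    · intro x hx
      have hxB : x ∈ (V j ⊔ Submodule.span ℝ {E j}) ⊔ ⨆ k, ⨆ _ : k ≠ j, psBlock H E V k :=
        Submodule.mem_sup_left hx
      have h' := LinearMap.ofIsCompl_right_apply hc
        (φ := (LinearEquiv.coord ℝ 𝔰 (H j) (H_ne P j)).toLinearMap) (ψ := 0) ⟨x, hxB⟩
      simpa using h'
  choose hfun h1 h2 h3 using key
  refine ⟨hfun, h1, ?_, ?_⟩
  · intro j k hjk
    exact h2 j k (Ne.symm hjk) (H k) (H_mem k)
  · intro j k x hx
    by_cases h : k = j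
    · subst h; exact h3 k x hx
    · exact h2 j k h x (W_le_block k hx)

lemma lieH_W_mem (j : Fin r) {x : 𝔰} (hx : x ∈ V j ⊔ Submodule.span ℝ {E j}) :
    ⁅H j, x⁆ ∈ V j ⊔ Submodule.span ℝ {E j} := by
  rcases Submodule.mem_sup.mp hx with ⟨v, hv, e, he, rfl⟩
  obtain ⟨b, rfl⟩ := Submodule.mem_span_singleton.mp he
  rw [P.lie_H j v hv b]
  exact Submodule.add_mem _ (Submodule.mem_sup_left hv)
    (Submodule.mem_sup_right (Submodule.smul_mem _ _ (Submodule.mem_span_singleton_self _)))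

lemma exists_alpha [Module.Finite ℝ 𝔰]
    (cj : ∀ j : Fin r, ↥(V j ⊔ Submodule.span ℝ {E j}) →ₗ[ℝ] ℂ) :
    ∃ α : 𝔰 →ₗ[ℝ] ℂ, ∀ (j : Fin r) (x : ↥(V j ⊔ Submodule.span ℝ {E j})),
      α ⁅H j, (x : 𝔰)⁆ = cj j x := by
  classical
  have key : ∀ j : Fin r, ∃ a : 𝔰 →ₗ[ℝ] ℂ,
      (∀ x : ↥(V j ⊔ Submodule.span ℝ {E j}), a ⁅H j, (x : 𝔰)⁆ = cj j x) ∧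
      (∀ k, k ≠ j → ∀ y ∈ psBlock H E V k, a y = 0) := by
    intro j
    have hmap : ∀ x ∈ V j ⊔ Submodule.span ℝ {E j},
        (adL (H j)) x ∈ V j ⊔ Submodule.span ℝ {E j} := fun x hx => lieH_W_mem P j hx
    set g : ↥(V j ⊔ Submodule.span ℝ {E j}) →ₗ[ℝ] ↥(V j ⊔ Submodule.span ℝ {E j}) :=
      (adL (H j)).restrict hmap with hg
    have hginj : Function.Injective g := by
      rw [← LinearMap.ker_eq_bot, LinearMap.ker_eq_bot']
      intro m hm
      have hm' : ⁅H j, (m : 𝔰)⁆ = 0 := by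
        have h' := congrArg (Subtype.val) hm
        simpa [hg, LinearMap.restrict_coe_apply] using h'
      rcases Submodule.mem_sup.mp m.2 with ⟨v, hv, e, he, hve⟩
      obtain ⟨b, rfl⟩ := Submodule.mem_span_singleton.mp he
      rw [← hve, P.lie_H j v hv b] at hm'
      have h0 : (0:ℝ) • H j + v + (2*b) • E j = 0 := by rw [zero_smul, zero_add]; exact hm'
      obtain ⟨-, hv0, hb0⟩ := P.inner_indep j 0 (2*b) v hv h0
      have hb : b = 0 := by linarith
      apply Subtype.ext
      simp [← hve, hv0, hb]
    have hgsurj : Function.Surjective g := LinearMap.injective_iff_surjective.mp hginj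
    set gE := LinearEquiv.ofBijective g ⟨hginj, hgsurj⟩ with hgE
    have hc := isCompl_W P j
    refine ⟨LinearMap.ofIsCompl hc ((cj j).comp (gE.symm).toLinearMap) 0, ?_, ?_⟩
    · intro x
      have hbx : ⁅H j, (x : 𝔰)⁆ = ((gE x : ↥(V j ⊔ Submodule.span ℝ {E j})) : 𝔰) := by
        simp [hgE, hg, LinearMap.restrict_coe_apply]
      rw [hbx, LinearMap.ofIsCompl_left_apply]
      simp
    · intro k hk y hy
      have hyB : y ∈ Submodule.span ℝ {H j} ⊔ ⨆ k, ⨆ _ : k ≠ j, psBlock H E V k :=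
        Submodule.mem_sup_right (block_le_others hk hy)
      have h' := LinearMap.ofIsCompl_right_apply hc
        (φ := ((cj j).comp (gE.symm).toLinearMap)) (ψ := 0) ⟨y, hyB⟩
      simpa using h'
  choose a ha1 ha2 using key
  refine ⟨∑ j, a j, ?_⟩
  intro j x
  simp only [LinearMap.coe_sum, Finset.sum_apply]
  rw [Finset.sum_eq_single j]
  · exact ha1 j x
  · intro k _ hkj
    exact ha2 k j (Ne.symm hkj) ⁅H j, (x : 𝔰)⁆ (W_le_block j (lieH_W_mem P j x.2))
  · intro hj; exact absurd (Finset.mem_univ j) hj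

end
end PSaux
end Part2
/-- For every choice of `ℝ`-linear maps `c_j : V_j ⊕ ℝE_j → ℂ` and constants
`c_{jk} ∈ ℂ` (`j < k`), there is a unique Chevalley–Eilenberg 2-cocycle `c` on `𝔰` with
`c(H_j, ·) = c_j` on `V_j ⊕ ℝE_j` and `c(H_j, H_k) = c_{jk}` for `j < k`. -/
theorem statement9 {r : ℕ} (𝔰 : Type) [LieRing 𝔰] [LieAlgebra ℝ 𝔰] [Module.Finite ℝ 𝔰]
    (H E : Fin r → 𝔰) (V : Fin r → Submodule ℝ 𝔰) (Ω : Fin r → 𝔰 →ₗ[ℝ] 𝔰 →ₗ[ℝ] ℝ)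
    (P : IsPSAlgebra H E V Ω)
    (cj : ∀ j : Fin r, ↥(V j ⊔ Submodule.span ℝ {E j}) →ₗ[ℝ] ℂ)
    (cjk : Fin r → Fin r → ℂ) :
    ∃! c : 𝔰 →ₗ[ℝ] 𝔰 →ₗ[ℝ] ℂ, IsCE2Cocycle c ∧
      (∀ (j : Fin r) (x : ↥(V j ⊔ Submodule.span ℝ {E j})), c (H j) (x : 𝔰) = cj j x) ∧
      (∀ j k : Fin r, j < k → c (H j) (H k) = cjk j k) := by
  classical
  obtain ⟨α, hα⟩ := PSaux.exists_alpha P cj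
  obtain ⟨h, hh1, hh2, hh3⟩ := PSaux.exists_h P
  have hbr : ∀ (j : Fin r) (X Y : 𝔰), h j ⁅X, Y⁆ = 0 := by
    intro j X Y
    have hm := PSaux.bracket_mem P X Y
    have hle : (⨆ k, (V k ⊔ Submodule.span ℝ {E k})) ≤ LinearMap.ker (h j) :=
      iSup_le fun k x hx => LinearMap.mem_ker.mpr (hh3 j k x hx)
    exact LinearMap.mem_ker.mp (hle hm)
  let c0 : 𝔰 →ₗ[ℝ] 𝔰 →ₗ[ℝ] ℂ := LinearMap.mk₂ ℝ (fun X Y => α ⁅X, Y⁆)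
    (fun X X' Y => by beta_reduce; rw [add_lie, map_add])
    (fun t X Y => by beta_reduce; rw [smul_lie, map_smul])
    (fun X Y Y' => by beta_reduce; rw [lie_add, map_add])
    (fun t X Y => by beta_reduce; rw [lie_smul, map_smul])
  let c1 : 𝔰 →ₗ[ℝ] 𝔰 →ₗ[ℝ] ℂ := LinearMap.mk₂ ℝ
    (fun X Y => ∑ j : Fin r, ∑ k : Fin r,
      if j < k then cjk j k * ((h j X * h k Y - h j Y * h k X : ℝ) : ℂ) else 0)
    (fun X X' Y => by
      beta_reduce
      rw [← Finset.sum_add_distrib]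
      refine Finset.sum_congr rfl fun a _ => ?_
      rw [← Finset.sum_add_distrib]
      refine Finset.sum_congr rfl fun b _ => ?_
      split_ifs with hab
      · rw [map_add, map_add]; push_cast; ring
      · rw [add_zero])
    (fun t X Y => by
      beta_reduce
      rw [Finset.smul_sum]
      refine Finset.sum_congr rfl fun a _ => ?_
      rw [Finset.smul_sum]
      refine Finset.sum_congr rfl fun b _ => ?_
      split_ifs with hab
      · rw [map_smul, map_smul]
        simp only [smul_eq_mul, Complex.real_smul]
        push_cast; ring
      · rw [smul_zero])
    (fun X Y Y' => by
      beta_reduce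
      rw [← Finset.sum_add_distrib]
      refine Finset.sum_congr rfl fun a _ => ?_
      rw [← Finset.sum_add_distrib]
      refine Finset.sum_congr rfl fun b _ => ?_
      split_ifs with hab
      · rw [map_add, map_add]; push_cast; ring
      · rw [add_zero])
    (fun t X Y => by
      beta_reduce
      rw [Finset.smul_sum]
      refine Finset.sum_congr rfl fun a _ => ?_
      rw [Finset.smul_sum]
      refine Finset.sum_congr rfl fun b _ => ?_
      split_ifs with hab
      · rw [map_smul, map_smul]
        simp only [smul_eq_mul, Complex.real_smul]
        push_cast; ring
      · rw [smul_zero])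
  set c : 𝔰 →ₗ[ℝ] 𝔰 →ₗ[ℝ] ℂ := c0 + c1 with hcdef
  have capply : ∀ X Y : 𝔰, c X Y = α ⁅X, Y⁆ + ∑ j : Fin r, ∑ k : Fin r,
      (if j < k then cjk j k * ((h j X * h k Y - h j Y * h k X : ℝ) : ℂ) else 0) :=
    fun X Y => rfl
  have hanti : ∀ X Y : 𝔰, c X Y = - c Y X := by
    intro X Y
    rw [capply, capply, neg_add]
    congr 1
    · rw [PSaux.skew X Y, map_neg]
    · rw [← Finset.sum_neg_distrib]
      refine Finset.sum_congr rfl fun a _ => ?_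
      rw [← Finset.sum_neg_distrib]
      refine Finset.sum_congr rfl fun b _ => ?_
      split_ifs with hab
      · push_cast; ring
      · rw [neg_zero]
  have hc1br : ∀ (W U T : 𝔰), (∑ j : Fin r, ∑ k : Fin r,
      if j < k then cjk j k * ((h j ⁅W, U⁆ * h k T - h j T * h k ⁅W, U⁆ : ℝ) : ℂ) else 0) = 0 := by
    intro W U T
    refine Finset.sum_eq_zero fun a _ => Finset.sum_eq_zero fun b _ => ?_
    split_ifs with hab
    · rw [hbr, hbr]; push_cast; ring
    · rfl
  have hjac : ∀ X Y Z : 𝔰, c ⁅X, Y⁆ Z + c ⁅Y, Z⁆ X + c ⁅Z, X⁆ Y = 0 := by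
    intro X Y Z
    rw [capply, capply, capply, hc1br, hc1br, hc1br, add_zero, add_zero, add_zero,
      ← map_add, ← map_add]
    have hzero : ⁅⁅X, Y⁆, Z⁆ + ⁅⁅Y, Z⁆, X⁆ + ⁅⁅Z, X⁆, Y⁆ = (0 : 𝔰) := by
      rw [PSaux.skew ⁅X, Y⁆ Z, PSaux.skew ⁅Y, Z⁆ X, PSaux.skew ⁅Z, X⁆ Y, ← neg_add, ← neg_add,
        neg_eq_zero]
      exact lie_jacobi Z X Y
    rw [hzero, map_zero]
  have hval1 : ∀ (j : Fin r) (x : ↥(V j ⊔ Submodule.span ℝ {E j})),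
      c (H j) (x : 𝔰) = cj j x := by
    intro j x
    rw [capply, hα j x]
    have hz : (∑ a : Fin r, ∑ b : Fin r,
        if a < b then cjk a b *
          ((h a (H j) * h b (x : 𝔰) - h a (x : 𝔰) * h b (H j) : ℝ) : ℂ) else 0) = 0 := by
      refine Finset.sum_eq_zero fun a _ => Finset.sum_eq_zero fun b _ => ?_
      split_ifs with hab
      · rw [hh3 a j (x : 𝔰) x.2, hh3 b j (x : 𝔰) x.2]; push_cast; ring
      · rfl
    rw [hz, add_zero]
  have hval2 : ∀ j k : Fin r, j < k → c (H j) (H k) = cjk j k := by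
    intro j k hjk
    rw [capply, PSaux.lieHH P j k, map_zero, zero_add]
    rw [Finset.sum_eq_single j]
    · rw [Finset.sum_eq_single k]
      · rw [if_pos hjk, hh1 j, hh1 k, hh2 j k hjk.ne]
        push_cast; ring
      · intro b _ hbk
        split_ifs with hab
        · rw [hh2 b k hbk, hh2 j k hjk.ne]; push_cast; ring
        · rfl
      · intro hk; exact absurd (Finset.mem_univ k) hk
    · intro a _ haj
      refine Finset.sum_eq_zero fun b _ => ?_
      split_ifs with hab
      · rw [hh2 a j haj]
        by_cases hak : a = k
        · subst hak
          rw [hh2 b j (lt_trans hjk hab).ne']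
          push_cast; ring
        · rw [hh2 a k hak]; push_cast; ring
      · rfl
    · intro hj; exact absurd (Finset.mem_univ j) hj
  refine ⟨c, ⟨⟨hanti, hjac⟩, hval1, hval2⟩, ?_⟩
  rintro y ⟨⟨ya, yj⟩, y1, y2⟩
  have hdz : y - c = 0 := by
    refine PSaux.cocycle_unique P (y - c) ⟨?_, ?_⟩ ?_ ?_
    · intro X Y
      simp only [LinearMap.sub_apply]
      rw [ya X Y, hanti X Y]; ring
    · intro X Y Z
      simp only [LinearMap.sub_apply]
      have h1' := yj X Y Z
      have h2' := hjac X Y Z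
      linear_combination h1' - h2'
    · intro j x hx
      simp only [LinearMap.sub_apply]
      have e1 : y (H j) x = cj j ⟨x, hx⟩ := y1 j ⟨x, hx⟩
      have e2 : c (H j) x = cj j ⟨x, hx⟩ := hval1 j ⟨x, hx⟩
      rw [e1, e2, sub_self]
    · intro j k hjk
      simp only [LinearMap.sub_apply]
      rw [y2 j k hjk, hval2 j k hjk, sub_self]
  exact sub_eq_zero.mp hdz
end
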